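/- Let p and q be odd primes with q ≠ p, let D be a squarefree integer, let j ≥ 1 be an integer, and let z ∈ ℤ[√D]. If Φ_p(z^{p^{j−1}}) ≡ 0 (mod q), then z^{p^j} ≡ 1 (mod q) and z^{p^{j−1}} ≢ 1 (mod q); in other words, the multiplicative order of z modulo q is exactly p^j. -/

import Mathlib

open Polynomial

theorem dvd_pow_sub_one_of_dvd_aeval_cyclotomic {R : Type*} [CommRing R] {m w : R} {n : ℕ}
    (h : m ∣ aeval w (cyclotomic n ℤ)) : m ∣ w ^ n - 1 :=
  h.trans <| by simpa using map_dvd (aeval w) (cyclotomic.dvd_X_pow_sub_one n ℤ)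

/-- Modulo `w - 1`, `Φ_p(w)` reduces to `Φ_p(1) = p`. -/
theorem dvd_natCast_of_dvd_aeval_cyclotomic_of_dvd_sub_one {R : Type*} [CommRing R]
    {m w : R} {p : ℕ} (hp : p.Prime) (hΦ : m ∣ aeval w (cyclotomic p ℤ)) (h1 : m ∣ w - 1) :
    m ∣ (p : R) := by
  have := Fact.mk hp
  have hΦR : aeval w (cyclotomic p ℤ) = eval w (cyclotomic p R) := by
    rw [aeval_def, eval₂_eq_eval_map, map_cyclotomic]
  have hsub : m ∣ eval w (cyclotomic p R) - eval 1 (cyclotomic p R) :=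
    h1.trans (sub_dvd_eval_sub w 1 _)
  rw [eval_one_cyclotomic_prime] at hsub
  rw [hΦR] at hΦ
  simpa only [sub_sub_cancel] using dvd_sub hΦ hsub

theorem Zsqrtd.natCast_dvd_natCast {d : ℤ} {a b : ℕ} : (a : ℤ√d) ∣ b ↔ a ∣ b := by
  simpa only [Int.cast_natCast, Int.natCast_dvd_natCast] using
    Zsqrtd.intCast_dvd_intCast (d := d) (a : ℤ) (b : ℤ)

theorem stmt_11_general (p q : ℕ) (hp : p.Prime) (hq : q.Prime)
    (hqp : q ≠ p)
    (D : ℤ)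
    (j : ℕ) (hj : 1 ≤ j) (z : Zsqrtd D)
    (hΦ : (q : Zsqrtd D) ∣
      (Polynomial.aeval (z ^ (p ^ (j - 1))) (Polynomial.cyclotomic p ℤ))) :
    (q : Zsqrtd D) ∣ (z ^ (p ^ j) - 1) ∧
      ¬ (q : Zsqrtd D) ∣ (z ^ (p ^ (j - 1)) - 1) := by
  have hpow : z ^ p ^ j = (z ^ p ^ (j - 1)) ^ p := by
    rw [← pow_mul, ← pow_succ, Nat.sub_add_cancel hj]
  refine ⟨hpow ▸ dvd_pow_sub_one_of_dvd_aeval_cyclotomic hΦ, fun h1 => hqp ?_⟩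
  have hq_dvd_p : q ∣ p := Zsqrtd.natCast_dvd_natCast.mp
    (dvd_natCast_of_dvd_aeval_cyclotomic_of_dvd_sub_one hp hΦ h1)
  exact (Nat.prime_dvd_prime_iff_eq hq hp).mp hq_dvd_p

/-- Key lemma from the proofs of Theorems 1.1 and 1.2: if `q ≠ p` is an odd
prime and `Φ_p(z^{p^{j−1}}) ≡ 0 (mod q)` in `ℤ[√D]`, then the multiplicative
order of `z` modulo `q` is exactly `p^j`. -/
theorem stmt_11 (p q : ℕ) (hp : p.Prime) (hq : q.Prime)
    (hpodd : Odd p) (hqodd : Odd q) (hqp : q ≠ p)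
    (D : ℤ) (hD : Squarefree D)
    (j : ℕ) (hj : 1 ≤ j) (z : Zsqrtd D)
    (hΦ : (q : Zsqrtd D) ∣
      (Polynomial.aeval (z ^ (p ^ (j - 1))) (Polynomial.cyclotomic p ℤ))) :
    (q : Zsqrtd D) ∣ (z ^ (p ^ j) - 1) ∧
      ¬ (q : Zsqrtd D) ∣ (z ^ (p ^ (j - 1)) - 1) :=
  stmt_11_general p q hp hq hqp D j hj z hΦ
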